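/- arXiv:1508.01720 — 4 statements merged into one kernel-verified Lean document; each statement's English description precedes it below -/
import Mathlib

section
/- Let N ∈ ℕ and C ≥ 2. Let p_1,…,p_C ≥ 0 and p̃_1,…,p̃_C > 0 be reals, let G_1,…,G_C and G̃_1,…,G̃_C be positive definite real N×N matrices, and for every ordered pair (i,j) with i ≠ j let α_ij > 0 be such that the matrix M_ij := G_i⁻¹ + α_ij·G̃_j⁻¹ − α_ij·G̃_i⁻¹ is positive definite. Then Σ_{i=1}^C p_i · ∫_{ℝ^N} g_{G_i}(y) · 1{∃ j ≠ i : p̃_j·g_{G̃_j}(y) ≥ p̃_i·g_{G̃_i}(y)} dy ≤ Σ_{i=1}^C p_i · Σ_{j ≠ i} (p̃_j/p̃_i)^{α_ij} · (det G̃_i / det G̃_j)^{α_ij/2} · (det G_i · det M_ij)^{−1/2}. -/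
/-!
On the error event of class `i` some `j ≠ i` has likelihood ratio
`r_j = p̃_j g_{G̃_j} / (p̃_i g_{G̃_i}) ≥ 1`, so the indicator is at most `∑_{j ≠ i} r_j ^ α_ij`
(a union bound combined with Chernoff's trick). Each `g_{G_i} r_j ^ α_ij` is an unnormalised
centred Gaussian with precision matrix `M_ij`; writing `M_ij = Sᵀ S`, the change of variables
`y ↦ S y` reduces its integral to the standard Gaussian one.
-/

open MeasureTheory Matrix

/-- The centered Gaussian density on `ℝ^N` with covariance matrix `G`:
`g_G(y) = (2π)^{-N/2} (det G)^{-1/2} exp(-(1/2) yᵀ G⁻¹ y)`. -/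
noncomputable def gaussDensity {N : ℕ} (G : Matrix (Fin N) (Fin N) ℝ)
    (y : Fin N → ℝ) : ℝ :=
  (2 * Real.pi) ^ (-(N : ℝ) / 2) * G.det ^ (-(1 : ℝ) / 2) *
    Real.exp (-(1 / 2) * (y ⬝ᵥ G⁻¹ *ᵥ y))

open Real

theorem integral_mul_indicator_le_sum_integral_mul_rpow {X ι : Type*} [MeasurableSpace X]
    {μ : Measure X} {f : X → ℝ} (hf : 0 ≤ f) {s : Finset ι} {r : ι → X → ℝ}
    (hr : ∀ j ∈ s, 0 ≤ r j) {a : ι → ℝ} (ha : ∀ j ∈ s, 0 ≤ a j)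
    (hint : ∀ j ∈ s, Integrable (fun x => f x * r j x ^ a j) μ) {S : Set X}
    (hS : ∀ x ∈ S, ∃ j ∈ s, 1 ≤ r j x) :
    ∫ x, f x * S.indicator (fun _ => (1 : ℝ)) x ∂μ ≤ ∑ j ∈ s, ∫ x, f x * r j x ^ a j ∂μ := by
  rw [← integral_finsetSum s hint]
  refine integral_mono_of_nonneg (.of_forall fun x => ?_) (integrable_finsetSum s hint)
    (.of_forall fun x => ?_)
  · exact mul_nonneg (hf x) (Set.indicator_nonneg (fun _ _ => zero_le_one) x)
  dsimp only
  have hterm : ∀ j ∈ s, 0 ≤ f x * r j x ^ a j :=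
    fun j hj => mul_nonneg (hf x) (rpow_nonneg (hr j hj x) _)
  by_cases hx : x ∈ S
  · obtain ⟨j, hj, hrj⟩ := hS x hx
    calc f x * S.indicator (fun _ => (1 : ℝ)) x = f x := by rw [Set.indicator_of_mem hx, mul_one]
      _ ≤ f x * r j x ^ a j := le_mul_of_one_le_right (hf x) (one_le_rpow hrj (ha j hj))
      _ ≤ ∑ j ∈ s, f x * r j x ^ a j := Finset.single_le_sum hterm hj
  · rw [Set.indicator_of_notMem hx, mul_zero]
    exact Finset.sum_nonneg hterm

section GaussianIntegral

variable {ι : Type*} [Fintype ι]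

theorem exp_neg_half_dotProduct_self (x : ι → ℝ) :
    exp (-(1 / 2) * (x ⬝ᵥ x)) = ∏ i, exp (-(1 / 2) * x i ^ 2) := by
  rw [← exp_sum, dotProduct, Finset.mul_sum]
  simp only [sq]

theorem integrable_exp_neg_half_dotProduct_self :
    Integrable (fun x : ι → ℝ => exp (-(1 / 2) * (x ⬝ᵥ x))) := by
  simp only [exp_neg_half_dotProduct_self]
  exact Integrable.fintype_prod fun _ => integrable_exp_neg_mul_sq (by norm_num)

theorem integral_exp_neg_half_dotProduct_self :
    ∫ x : ι → ℝ, exp (-(1 / 2) * (x ⬝ᵥ x)) = (2 * π) ^ ((Fintype.card ι : ℝ) / 2) := by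
  simp only [exp_neg_half_dotProduct_self]
  rw [integral_fintype_prod_volume_eq_pow (fun v : ℝ => exp (-(1 / 2) * v ^ 2)), integral_gaussian,
    ← rpow_natCast, div_eq_mul_inv π, div_eq_mul_inv, one_mul, inv_inv, mul_comm π,
    sqrt_eq_rpow, ← rpow_mul (by positivity)]
  ring_nf

variable [DecidableEq ι] {S : Matrix ι ι ℝ}

theorem map_mulVec_volume (hS : S.det ≠ 0) :
    Measure.map (S *ᵥ ·) (volume : Measure (ι → ℝ)) = ENNReal.ofReal |S.det|⁻¹ • volume := by
  have hdet : LinearMap.det (toLin' S) ≠ 0 := by rwa [LinearMap.det_toLin']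
  rw [← abs_inv, ← LinearMap.det_toLin', ← Measure.map_linearMap_addHaar_pi_eq_smul_addHaar hdet]
  rfl

theorem measurableEmbedding_mulVec (hS : S.det ≠ 0) : MeasurableEmbedding (S *ᵥ · : (ι → ℝ) → _) :=
  have hdet : LinearMap.det (toLin' S) ≠ 0 := by rwa [LinearMap.det_toLin']
  (LinearMap.equivOfDetNeZero _ hdet).toContinuousLinearEquiv.toHomeomorph.measurableEmbedding

theorem integrable_comp_mulVec_iff (hS : S.det ≠ 0) {E : Type*} [NormedAddCommGroup E]
    {g : (ι → ℝ) → E} : Integrable (fun y => g (S *ᵥ y)) ↔ Integrable g := by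
  rw [← Function.comp_def, ← (measurableEmbedding_mulVec hS).integrable_map_iff,
    map_mulVec_volume hS, integrable_smul_measure (by simpa using hS) ENNReal.ofReal_ne_top]

theorem integral_comp_mulVec (hS : S.det ≠ 0) {E : Type*} [NormedAddCommGroup E]
    [NormedSpace ℝ E] (g : (ι → ℝ) → E) : ∫ y, g (S *ᵥ y) = |S.det|⁻¹ • ∫ x, g x := by
  rw [← (measurableEmbedding_mulVec hS).integral_map, map_mulVec_volume hS,
    integral_smul_measure, ENNReal.toReal_ofReal (by positivity)]

open scoped MatrixOrder in
theorem Matrix.PosDef.exists_dotProduct_mulVec_eq {M : Matrix ι ι ℝ} (hM : M.PosDef) :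
    ∃ S : Matrix ι ι ℝ, S.det ≠ 0 ∧ |S.det|⁻¹ = M.det ^ (-(1 : ℝ) / 2) ∧
      ∀ y, y ⬝ᵥ M *ᵥ y = (S *ᵥ y) ⬝ᵥ (S *ᵥ y) := by
  obtain ⟨S, hS, rfl⟩ :=
    CStarAlgebra.isStrictlyPositive_iff_eq_star_mul_self.mp hM.isStrictlyPositive
  have hdet : (star S * S).det = |S.det| ^ 2 := by
    rw [det_mul, star_eq_conjTranspose, det_conjTranspose, star_trivial, sq_abs, sq]
  refine ⟨S, (isUnit_iff_isUnit_det S).mp hS |>.ne_zero, ?_, fun y => ?_⟩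
  · rw [hdet, ← rpow_natCast, ← rpow_mul (abs_nonneg _)]
    norm_num [rpow_neg_one]
  · rw [← mulVec_mulVec, dotProduct_mulVec, star_eq_conjTranspose, conjTranspose_eq_transpose_of_trivial,
      vecMul_transpose]

theorem integrable_exp_neg_half_dotProduct_mulVec {M : Matrix ι ι ℝ} (hM : M.PosDef) :
    Integrable (fun y : ι → ℝ => exp (-(1 / 2) * (y ⬝ᵥ M *ᵥ y))) := by
  obtain ⟨S, hS, -, hq⟩ := hM.exists_dotProduct_mulVec_eq
  simp only [hq]
  exact (integrable_comp_mulVec_iff hS (g := fun x => exp (-(1 / 2) * (x ⬝ᵥ x)))).mpr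
    integrable_exp_neg_half_dotProduct_self

theorem integral_exp_neg_half_dotProduct_mulVec {M : Matrix ι ι ℝ} (hM : M.PosDef) :
    ∫ y : ι → ℝ, exp (-(1 / 2) * (y ⬝ᵥ M *ᵥ y))
      = (2 * π) ^ ((Fintype.card ι : ℝ) / 2) * M.det ^ (-(1 : ℝ) / 2) := by
  obtain ⟨S, hS, hdet, hq⟩ := hM.exists_dotProduct_mulVec_eq
  simp only [hq]
  rw [integral_comp_mulVec hS (fun x => exp (-(1 / 2) * (x ⬝ᵥ x))),
    integral_exp_neg_half_dotProduct_self, hdet, smul_eq_mul, mul_comm]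

end GaussianIntegral

section GaussDensity

variable {N : ℕ}

theorem gaussDensity_pos {G : Matrix (Fin N) (Fin N) ℝ} (hG : 0 < G.det) (y : Fin N → ℝ) :
    0 < gaussDensity G y := by
  unfold gaussDensity
  positivity

theorem log_gaussDensity {G : Matrix (Fin N) (Fin N) ℝ} (hG : 0 < G.det) (y : Fin N → ℝ) :
    log (gaussDensity G y)
      = -(N : ℝ) / 2 * log (2 * π) - 1 / 2 * log G.det - 1 / 2 * (y ⬝ᵥ G⁻¹ *ᵥ y) := by
  unfold gaussDensity
  rw [log_mul (by positivity) (exp_pos _).ne', log_mul (by positivity) (by positivity),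
    log_rpow (by positivity), log_rpow hG, log_exp]
  ring

variable {Gi Gti Gtj : Matrix (Fin N) (Fin N) ℝ} {pti ptj : ℝ}

theorem gaussDensity_mul_likelihoodRatio_rpow (hGi : 0 < Gi.det) (hGti : 0 < Gti.det)
    (hGtj : 0 < Gtj.det) (hpti : 0 < pti) (hptj : 0 < ptj) (a : ℝ) (y : Fin N → ℝ) :
    gaussDensity Gi y * (ptj * gaussDensity Gtj y / (pti * gaussDensity Gti y)) ^ a
      = (ptj / pti) ^ a * (Gti.det / Gtj.det) ^ (a / 2)
          * ((2 * π) ^ (-(N : ℝ) / 2) * Gi.det ^ (-(1 : ℝ) / 2))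
          * exp (-(1 / 2) * (y ⬝ᵥ (Gi⁻¹ + a • Gtj⁻¹ - a • Gti⁻¹) *ᵥ y)) := by
  have hgi := gaussDensity_pos hGi y
  have hgti := gaussDensity_pos hGti y
  have hgtj := gaussDensity_pos hGtj y
  have hratio : 0 < ptj * gaussDensity Gtj y / (pti * gaussDensity Gti y) := by positivity
  refine log_injOn_pos (by positivity : _ > (0:ℝ)) (by positivity : _ > (0:ℝ)) ?_
  rw [log_mul hgi.ne' (rpow_pos_of_pos hratio a).ne', log_rpow hratio,
    log_div (by positivity) (by positivity), log_mul hptj.ne' hgtj.ne',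
    log_mul hpti.ne' hgti.ne', log_mul (by positivity) (exp_pos _).ne',
    log_mul (by positivity) (by positivity), log_mul (by positivity) (by positivity),
    log_mul (by positivity) (by positivity), log_rpow (by positivity), log_rpow (by positivity),
    log_rpow (by positivity), log_rpow hGi, log_exp, log_div hptj.ne' hpti.ne',
    log_div hGti.ne' hGtj.ne', log_gaussDensity hGi, log_gaussDensity hGti,
    log_gaussDensity hGtj, sub_mulVec, add_mulVec, smul_mulVec, smul_mulVec, dotProduct_sub,
    dotProduct_add, dotProduct_smul, dotProduct_smul, smul_eq_mul, smul_eq_mul]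
  ring

theorem integrable_gaussDensity_mul_likelihoodRatio_rpow (hGi : 0 < Gi.det) (hGti : 0 < Gti.det)
    (hGtj : 0 < Gtj.det) (hpti : 0 < pti) (hptj : 0 < ptj) {a : ℝ}
    (hM : (Gi⁻¹ + a • Gtj⁻¹ - a • Gti⁻¹).PosDef) :
    Integrable fun y =>
      gaussDensity Gi y * (ptj * gaussDensity Gtj y / (pti * gaussDensity Gti y)) ^ a := by
  simp only [gaussDensity_mul_likelihoodRatio_rpow hGi hGti hGtj hpti hptj]
  exact (integrable_exp_neg_half_dotProduct_mulVec hM).const_mul _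

theorem integral_gaussDensity_mul_likelihoodRatio_rpow (hGi : 0 < Gi.det) (hGti : 0 < Gti.det)
    (hGtj : 0 < Gtj.det) (hpti : 0 < pti) (hptj : 0 < ptj) {a : ℝ}
    (hM : (Gi⁻¹ + a • Gtj⁻¹ - a • Gti⁻¹).PosDef) :
    ∫ y, gaussDensity Gi y * (ptj * gaussDensity Gtj y / (pti * gaussDensity Gti y)) ^ a
      = (ptj / pti) ^ a * (Gti.det / Gtj.det) ^ (a / 2)
          * (Gi.det * (Gi⁻¹ + a • Gtj⁻¹ - a • Gti⁻¹).det) ^ (-(1 : ℝ) / 2) := by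
  simp only [gaussDensity_mul_likelihoodRatio_rpow hGi hGti hGtj hpti hptj]
  rw [integral_const_mul, integral_exp_neg_half_dotProduct_mulVec hM, Fintype.card_fin,
    mul_rpow hGi.le hM.det_pos.le]
  have h2π : (2 * π) ^ (-(N : ℝ) / 2) * (2 * π) ^ ((N : ℝ) / 2) = 1 := by
    rw [← rpow_add (by positivity), neg_div, neg_add_cancel, rpow_zero]
  linear_combination (ptj / pti) ^ a * (Gti.det / Gtj.det) ^ (a / 2) * Gi.det ^ (-(1 : ℝ) / 2)
    * (Gi⁻¹ + a • Gtj⁻¹ - a • Gti⁻¹).det ^ (-(1 : ℝ) / 2) * h2π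

end GaussDensity

theorem mismatched_map_error_probability_upper_bound_general
    (N C : ℕ)
    (p : Fin C → ℝ) (hp : ∀ i, 0 ≤ p i)
    (pt : Fin C → ℝ) (hpt : ∀ i, 0 < pt i)
    (G Gt : Fin C → Matrix (Fin N) (Fin N) ℝ)
    (hG : ∀ i, (G i).PosDef) (hGt : ∀ i, (Gt i).PosDef)
    (α : Fin C → Fin C → ℝ)
    (hα : ∀ i j, i ≠ j → 0 < α i j)
    (hM : ∀ i j, i ≠ j →
      ((G i)⁻¹ + α i j • (Gt j)⁻¹ - α i j • (Gt i)⁻¹).PosDef) :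
    ∑ i, p i *
        ∫ y : Fin N → ℝ,
          gaussDensity (G i) y *
            Set.indicator
              {y : Fin N → ℝ | ∃ j, j ≠ i ∧
                pt i * gaussDensity (Gt i) y ≤ pt j * gaussDensity (Gt j) y}
              (fun _ => (1 : ℝ)) y
      ≤ ∑ i, p i *
          ∑ j ∈ Finset.univ.erase i,
            (pt j / pt i) ^ α i j * ((Gt i).det / (Gt j).det) ^ (α i j / 2) *
              ((G i).det *
                  ((G i)⁻¹ + α i j • (Gt j)⁻¹ - α i j • (Gt i)⁻¹).det) ^ (-(1 : ℝ) / 2) := by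
  refine Finset.sum_le_sum fun i _ => mul_le_mul_of_nonneg_left ?_ (hp i)
  have hdet : ∀ k, 0 < (Gt k).det := fun k => (hGt k).det_pos
  have hweighted : ∀ k y, 0 < pt k * gaussDensity (Gt k) y :=
    fun k y => mul_pos (hpt k) (gaussDensity_pos (hdet k) y)
  have hne : ∀ j ∈ Finset.univ.erase i, i ≠ j := fun j hj => (Finset.ne_of_mem_erase hj).symm
  calc _ ≤ ∑ j ∈ Finset.univ.erase i, ∫ y, gaussDensity (G i) y *
          (pt j * gaussDensity (Gt j) y / (pt i * gaussDensity (Gt i) y)) ^ α i j := by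
        refine integral_mul_indicator_le_sum_integral_mul_rpow
          (fun y => (gaussDensity_pos (hG i).det_pos y).le)
          (fun j _ y => (div_pos (hweighted j y) (hweighted i y)).le)
          (fun j hj => (hα i j (hne j hj)).le)
          (fun j hj => integrable_gaussDensity_mul_likelihoodRatio_rpow (hG i).det_pos (hdet i)
            (hdet j) (hpt i) (hpt j) (hM i j (hne j hj))) ?_
        rintro y ⟨j, hji, hle⟩
        exact ⟨j, Finset.mem_erase.2 ⟨hji, Finset.mem_univ j⟩, (one_le_div (hweighted i y)).2 hle⟩
    _ = _ := Finset.sum_congr rfl fun j hj =>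
        integral_gaussDensity_mul_likelihoodRatio_rpow (hG i).det_pos (hdet i) (hdet j) (hpt i)
          (hpt j) (hM i j (hne j hj))

/-- Theorem 1 of the paper: Chernoff-type upper bound on the error probability of the
mismatched MAP classifier. Here `G i = Σ_i + σ²I` and `Gt i = Σ̃_i + σ²I`. -/
theorem mismatched_map_error_probability_upper_bound
    (N C : ℕ) (hC : 2 ≤ C)
    (p : Fin C → ℝ) (hp : ∀ i, 0 ≤ p i)
    (pt : Fin C → ℝ) (hpt : ∀ i, 0 < pt i)
    (G Gt : Fin C → Matrix (Fin N) (Fin N) ℝ)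
    (hG : ∀ i, (G i).PosDef) (hGt : ∀ i, (Gt i).PosDef)
    (α : Fin C → Fin C → ℝ)
    (hα : ∀ i j, i ≠ j → 0 < α i j)
    (hM : ∀ i j, i ≠ j →
      ((G i)⁻¹ + α i j • (Gt j)⁻¹ - α i j • (Gt i)⁻¹).PosDef) :
    ∑ i, p i *
        ∫ y : Fin N → ℝ,
          gaussDensity (G i) y *
            Set.indicator
              {y : Fin N → ℝ | ∃ j, j ≠ i ∧
                pt i * gaussDensity (Gt i) y ≤ pt j * gaussDensity (Gt j) y}
              (fun _ => (1 : ℝ)) y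
      ≤ ∑ i, p i *
          ∑ j ∈ Finset.univ.erase i,
            (pt j / pt i) ^ α i j * ((Gt i).det / (Gt j).det) ^ (α i j / 2) *
              ((G i).det *
                  ((G i)⁻¹ + α i j • (Gt j)⁻¹ - α i j • (Gt i)⁻¹).det) ^ (-(1 : ℝ) / 2) :=
  mismatched_map_error_probability_upper_bound_general N C p hp pt hpt G Gt hG hGt α hα hM
end

section
/- Let A', B', V be subspaces of ℝ^N and let c₀ > 0 be a real number such that ⟨x, (P_{A'} − P_{B'})x⟩ ≥ c₀‖x‖² for every x ∈ V. Then for every v ∈ V, every w ∈ (A')ᗮ ⊓ (B')ᗮ, and every z ∈ ℝ^N, setting x = v + w + z, one has ⟨x, (P_{A'} − P_{B'})x⟩ ≥ c₀‖v‖² − 2‖v‖·‖z‖ − ‖z‖². -/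
/-! The difference `D = P_A - P_B` of two orthogonal projections is self-adjoint and a
contraction: `P_A x - P_B x = P_A (P_{Bᗮ} x) - P_{Aᗮ} (P_B x)` is a sum of two orthogonal vectors
of norms at most `‖P_{Bᗮ} x‖` and `‖P_B x‖`, whose squares add up to `‖x‖²`. A vector `w` orthogonal to `A` and `B`
lies in the kernel of `D`, so by self-adjointness it drops out of the quadratic form `⟨x, D x⟩`;
and since `‖D‖ ≤ 1`, the cross terms `⟨v, D z⟩`, `⟨z, D v⟩` cost at most `‖v‖ ‖z‖` each and
`⟨z, D z⟩` at most `‖z‖²`. -/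

/-- The orthogonal projection onto a subspace `S`, viewed as an endomorphism. -/
noncomputable def projCLM {E : Type*} [NormedAddCommGroup E] [InnerProductSpace ℝ E]
    [FiniteDimensional ℝ E] (S : Submodule ℝ E) : E →L[ℝ] E :=
  S.subtypeL.comp S.orthogonalProjection

theorem projCLM_eq_starProjection {E : Type*} [NormedAddCommGroup E] [InnerProductSpace ℝ E]
    [FiniteDimensional ℝ E] (S : Submodule ℝ E) : projCLM S = S.starProjection :=
  rfl

open Submodule

section Projection

variable {𝕜 E : Type*} [RCLike 𝕜] [NormedAddCommGroup E] [InnerProductSpace 𝕜 E]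

theorem starProjection_sub_starProjection_apply (A B : Submodule 𝕜 E)
    [A.HasOrthogonalProjection] [B.HasOrthogonalProjection] (x : E) :
    A.starProjection x - B.starProjection x =
      A.starProjection (Bᗮ.starProjection x) - Aᗮ.starProjection (B.starProjection x) := by
  simp only [starProjection_orthogonal_val, map_sub]
  abel

theorem norm_starProjection_sub_starProjection_apply_le (A B : Submodule 𝕜 E)
    [A.HasOrthogonalProjection] [B.HasOrthogonalProjection] (x : E) :
    ‖A.starProjection x - B.starProjection x‖ ≤ ‖x‖ := by
  have horth :
      inner 𝕜 (A.starProjection (Bᗮ.starProjection x)) (Aᗮ.starProjection (B.starProjection x))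
        = 0 :=
    inner_right_of_mem_orthogonal (starProjection_apply_mem _ _) (starProjection_apply_mem _ _)
  have hsq : ‖A.starProjection x - B.starProjection x‖ ^ 2 ≤ ‖x‖ ^ 2 :=
    calc ‖A.starProjection x - B.starProjection x‖ ^ 2
        = ‖A.starProjection (Bᗮ.starProjection x)‖ ^ 2
          + ‖Aᗮ.starProjection (B.starProjection x)‖ ^ 2 := by
          rw [starProjection_sub_starProjection_apply, norm_sub_sq (𝕜 := 𝕜), horth, map_zero,
            mul_zero, sub_zero]
      _ ≤ ‖Bᗮ.starProjection x‖ ^ 2 + ‖B.starProjection x‖ ^ 2 := by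
          gcongr <;> exact norm_starProjection_apply_le _ _
      _ = ‖x‖ ^ 2 := by rw [norm_sq_eq_add_norm_sq_starProjection x B, add_comm]
  exact (pow_le_pow_iff_left₀ (norm_nonneg _) (norm_nonneg _) two_ne_zero).1 hsq

theorem norm_starProjection_sub_starProjection_le_one (A B : Submodule 𝕜 E)
    [A.HasOrthogonalProjection] [B.HasOrthogonalProjection] :
    ‖A.starProjection - B.starProjection‖ ≤ 1 :=
  ContinuousLinearMap.opNorm_le_bound _ zero_le_one fun x ↦ by
    simpa using norm_starProjection_sub_starProjection_apply_le A B x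

theorem LinearMap.IsSymmetric.inner_add_apply_add_of_apply_eq_zero {T : E →ₗ[𝕜] E}
    (hT : T.IsSymmetric) (u : E) {w : E} (hw : T w = 0) :
    inner 𝕜 (u + w) (T (u + w)) = inner 𝕜 u (T u) := by
  rw [map_add, hw, add_zero, inner_add_left, ← hT w u, hw, inner_zero_left, add_zero]

end Projection

section Real

variable {E : Type*} [NormedAddCommGroup E] [InnerProductSpace ℝ E]

theorem ContinuousLinearMap.neg_norm_mul_norm_le_inner_apply {T : E →L[ℝ] E} (hT : ‖T‖ ≤ 1)
    (u y : E) :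
    -(‖u‖ * ‖y‖) ≤ inner ℝ u (T y) := by
  have hTy : ‖T y‖ ≤ ‖y‖ := by simpa using T.le_of_opNorm_le hT y
  calc -(‖u‖ * ‖y‖) ≤ -(‖u‖ * ‖T y‖) := by gcongr
    _ ≤ inner ℝ u (T y) := neg_le_of_abs_le (abs_real_inner_le_norm u (T y))

theorem ContinuousLinearMap.inner_apply_sub_le_inner_add_apply_add {T : E →L[ℝ] E}
    (hT : ‖T‖ ≤ 1) (v z : E) :
    inner ℝ v (T v) - 2 * ‖v‖ * ‖z‖ - ‖z‖ ^ 2 ≤ inner ℝ (v + z) (T (v + z)) := by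
  have hvz := T.neg_norm_mul_norm_le_inner_apply hT v z
  have hzv := T.neg_norm_mul_norm_le_inner_apply hT z v
  have hzz := T.neg_norm_mul_norm_le_inner_apply hT z z
  rw [map_add, inner_add_left, inner_add_right, inner_add_right]
  nlinarith

end Real

theorem proj_difference_lower_bound_general
    (N : ℕ) (A' B' V : Submodule ℝ (EuclideanSpace ℝ (Fin N)))
    (c₀ : ℝ)
    (h : ∀ x ∈ V, c₀ * ‖x‖ ^ 2 ≤ (inner ℝ x ((projCLM A' - projCLM B') x) : ℝ)) :
    ∀ v ∈ V, ∀ w ∈ A'ᗮ ⊓ B'ᗮ, ∀ z : EuclideanSpace ℝ (Fin N),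
      c₀ * ‖v‖ ^ 2 - 2 * ‖v‖ * ‖z‖ - ‖z‖ ^ 2
        ≤ (inner ℝ (v + w + z) ((projCLM A' - projCLM B') (v + w + z)) : ℝ) := by
  intro v hv w hw z
  simp only [projCLM_eq_starProjection] at h ⊢
  set D := A'.starProjection - B'.starProjection
  have hDw : D w = 0 := by
    simp [D, (starProjection_apply_eq_zero_iff A').2 hw.1,
      (starProjection_apply_eq_zero_iff B').2 hw.2]
  have hD : (D : EuclideanSpace ℝ (Fin N) →ₗ[ℝ] _).IsSymmetric := by
    rw [ContinuousLinearMap.toLinearMap_sub]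
    exact (starProjection_isSymmetric A').sub (starProjection_isSymmetric B')
  calc c₀ * ‖v‖ ^ 2 - 2 * ‖v‖ * ‖z‖ - ‖z‖ ^ 2
      ≤ inner ℝ v (D v) - 2 * ‖v‖ * ‖z‖ - ‖z‖ ^ 2 := by linarith [h v hv]
    _ ≤ inner ℝ (v + z) (D (v + z)) := D.inner_apply_sub_le_inner_add_apply_add
      (norm_starProjection_sub_starProjection_le_one A' B') v z
    _ = inner ℝ (v + w + z) (D (v + w + z)) := by
      rw [add_right_comm]
      exact (hD.inner_add_apply_add_of_apply_eq_zero (v + z) hDw).symm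

/-- Lemma 4 in the Appendix of the paper: the lower bound (eq:ineq5) on
`⟨x, (P_{A'} − P_{B'})x⟩` for `x = v + w + z` with `v ∈ V`, `w ∈ (A')ᗮ ⊓ (B')ᗮ`. -/
theorem proj_difference_lower_bound
    (N : ℕ) (A' B' V : Submodule ℝ (EuclideanSpace ℝ (Fin N)))
    (c₀ : ℝ) (hc₀ : 0 < c₀)
    (h : ∀ x ∈ V, c₀ * ‖x‖ ^ 2 ≤ (inner ℝ x ((projCLM A' - projCLM B') x) : ℝ)) :
    ∀ v ∈ V, ∀ w ∈ A'ᗮ ⊓ B'ᗮ, ∀ z : EuclideanSpace ℝ (Fin N),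
      c₀ * ‖v‖ ^ 2 - 2 * ‖v‖ * ‖z‖ - ‖z‖ ^ 2
        ≤ (inner ℝ (v + w + z) ((projCLM A' - projCLM B') (v + w + z)) : ℝ) :=
  proj_difference_lower_bound_general N A' B' V c₀ h
end

section
/- Let K be a real symmetric positive semidefinite N×N matrix of rank r, and let L : (0,∞) → ℝ^{N×N} be a family of real symmetric matrices with L(t) → L⁰ as t → ∞. Then: (a) if r = N, lim_{t→∞} t^{−N} det(L(t) + t·K) = det K; (b) if r < N and U^⊥ ∈ ℝ^{N×(N−r)} is any matrix whose columns form an orthonormal basis of ker K, then lim_{t→∞} t^{−r} det(L(t) + t·K) = pdet(K) · det((U^⊥)ᵀ L⁰ U^⊥), where pdet(K) denotes the product of the nonzero (i.e. positive) eigenvalues of K. -/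
/-!
Conjugate by an orthogonal matrix whose first columns are the eigenvectors of `K` with nonzero
eigenvalue and whose remaining columns are those of `U^⊥`. In this basis `t • K` is block diagonal
with blocks `t • Λ` and `0`. Dividing the first `r` rows of the conjugated `L t + t • K` by `t`
multiplies the determinant by `t⁻ʳ` and produces a matrix converging to the block lower triangular
matrix with diagonal blocks `Λ` and `(U^⊥)ᵀ L⁰ U^⊥`, whose determinant is
`pdet K * det ((U^⊥)ᵀ L⁰ U^⊥)`. For `r = N` the second block is empty.
-/

open Matrix Filter

/-- The pseudo-determinant of a Hermitian real matrix: the product of its nonzero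
eigenvalues. -/
noncomputable def pdet {N : ℕ} (K : Matrix (Fin N) (Fin N) ℝ) (hK : K.IsHermitian) : ℝ :=
  ∏ i ∈ Finset.univ.filter (fun i => hK.eigenvalues i ≠ 0), hK.eigenvalues i

open Topology

namespace Matrix

variable {m n k : Type*}

theorem det_transpose_mul_mul_of_transpose_mul_self_eq_one {R : Type*} [CommRing R]
    [Fintype n] [Fintype k] [DecidableEq n] [DecidableEq k] (e : k ≃ n)
    {Q : Matrix n k R} (hQ : Qᵀ * Q = 1) (X : Matrix n n R) : (Qᵀ * X * Q).det = X.det := by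
  have hreindex : Qᵀ * X * Q
      = ((Q.submatrix id e.symm)ᵀ * X * Q.submatrix id e.symm).submatrix e e := by
    ext i j
    simp [mul_apply]
  have hdet : (Q.submatrix id e.symm).det * (Q.submatrix id e.symm).det = 1 := by
    nth_rewrite 1 [← det_transpose]
    rw [← det_mul, transpose_submatrix, ← submatrix_mul _ _ _ _ _ Function.bijective_id, hQ,
      submatrix_one_equiv, det_one]
  rw [hreindex, det_submatrix_equiv_self, det_mul, det_mul, det_transpose]
  linear_combination X.det * hdet

theorem tendsto_det_add_smul_fromBlocks_diagonal_div_pow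
    [Fintype m] [Fintype n] [DecidableEq m] [DecidableEq n]
    {A : ℝ → Matrix (m ⊕ n) (m ⊕ n) ℝ} {A₀ : Matrix (m ⊕ n) (m ⊕ n) ℝ}
    (hA : Tendsto A atTop (𝓝 A₀)) (d : m → ℝ) :
    Tendsto (fun t : ℝ => (A t + t • fromBlocks (diagonal d) 0 0 0).det / t ^ Fintype.card m)
      atTop (𝓝 ((∏ i, d i) * A₀.toBlocks₂₂.det)) := by
  let S : ℝ → Matrix (m ⊕ n) (m ⊕ n) ℝ := fun s => fromBlocks (s • 1) 0 0 1
  have hS : Tendsto (fun t : ℝ => S t⁻¹) atTop (𝓝 (S 0)) :=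
    ((continuous_id.smul continuous_const).matrix_fromBlocks continuous_const continuous_const
      continuous_const).continuousAt.tendsto.comp tendsto_inv_atTop_zero
  have hrescale : ∀ᶠ t in atTop, (A t + t • fromBlocks (diagonal d) 0 0 0).det / t ^ Fintype.card m
      = (S t⁻¹ * A t + fromBlocks (diagonal d) 0 0 0).det := by
    filter_upwards [eventually_ne_atTop 0] with t ht
    have hSF : S t⁻¹ * (t • fromBlocks (diagonal d) 0 0 0) = fromBlocks (diagonal d) 0 0 0 := by
      simp [S, fromBlocks_multiply, fromBlocks_smul, smul_smul, ht]
    have hdetS : (S t⁻¹).det = (t ^ Fintype.card m)⁻¹ := by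
      simp [S]
    rw [div_eq_inv_mul, ← hdetS, ← det_mul, Matrix.mul_add, hSF]
  have hlimit : S 0 * A₀ + fromBlocks (diagonal d) 0 0 0
      = fromBlocks (diagonal d) 0 A₀.toBlocks₂₁ A₀.toBlocks₂₂ := by
    conv_lhs => rw [← fromBlocks_toBlocks A₀]
    simp [S, fromBlocks_multiply, fromBlocks_add]
  refine Tendsto.congr' (EventuallyEq.symm hrescale) ?_
  have := (continuous_id.matrix_det.tendsto _).comp
    ((hS.mul hA).add_const (fromBlocks (diagonal d) 0 0 0))
  rwa [hlimit, id, det_fromBlocks_zero₁₂, det_diagonal] at this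

theorem tendsto_det_add_smul_div_pow_of_mul_eq_mul_fromBlocks
    [Fintype m] [Fintype n] [Fintype k] [DecidableEq m] [DecidableEq n] [DecidableEq k]
    (e : m ⊕ k ≃ n) {K L₀ : Matrix n n ℝ} {L : ℝ → Matrix n n ℝ} (hL : Tendsto L atTop (𝓝 L₀))
    {Q : Matrix n (m ⊕ k) ℝ} (hQ : Qᵀ * Q = 1) {d : m → ℝ}
    (hKQ : K * Q = Q * fromBlocks (diagonal d) 0 0 (0 : Matrix k k ℝ)) :
    Tendsto (fun t : ℝ => (L t + t • K).det / t ^ Fintype.card m) atTop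
      (𝓝 ((∏ i, d i) * (Qᵀ * L₀ * Q).toBlocks₂₂.det)) := by
  have hQKQ : Qᵀ * K * Q = fromBlocks (diagonal d) 0 0 0 := by
    rw [Matrix.mul_assoc, hKQ, ← Matrix.mul_assoc Qᵀ Q, hQ, Matrix.one_mul]
  have hconj (t : ℝ) :
      (L t + t • K).det = (Qᵀ * L t * Q + t • fromBlocks (diagonal d) 0 0 0).det := by
    rw [← det_transpose_mul_mul_of_transpose_mul_self_eq_one e hQ, Matrix.mul_add, Matrix.add_mul,
      Matrix.mul_smul, Matrix.smul_mul, hQKQ]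
  simp_rw [hconj]
  exact tendsto_det_add_smul_fromBlocks_diagonal_div_pow
    (((continuous_const.matrix_mul continuous_id).matrix_mul continuous_const).tendsto L₀ |>.comp
      hL) d

theorem transpose_mul_eq_zero_of_mul_eq_mul_diagonal [Fintype n] [Fintype m] [DecidableEq m]
    {K : Matrix n n ℝ} (hK : K.IsSymm)
    {Q : Matrix n m ℝ} {d : m → ℝ} (hd : ∀ i, d i ≠ 0) (hKQ : K * Q = Q * diagonal d)
    {V : Matrix n k ℝ} (hKV : K * V = 0) : Qᵀ * V = 0 := by
  have hdQV : diagonal d * (Qᵀ * V) = 0 := by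
    rw [← diagonal_transpose, ← Matrix.mul_assoc, ← transpose_mul, ← hKQ, transpose_mul, hK.eq,
      Matrix.mul_assoc, hKV, Matrix.mul_zero]
  ext i j
  simpa [hd i] using congr_fun₂ hdQV i j

namespace IsHermitian

variable [Fintype n] [DecidableEq n] {K : Matrix n n ℝ} (hK : K.IsHermitian)

noncomputable def rangeEigenvectors : Matrix n {i // hK.eigenvalues i ≠ 0} ℝ :=
  (hK.eigenvectorUnitary : Matrix n n ℝ).submatrix id Subtype.val

theorem transpose_rangeEigenvectors_mul_self :
    hK.rangeEigenvectorsᵀ * hK.rangeEigenvectors = 1 := by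
  rw [rangeEigenvectors, transpose_submatrix, ← submatrix_mul _ _ _ _ _ Function.bijective_id,
    ← conjTranspose_eq_transpose_of_trivial, ← star_eq_conjTranspose, Unitary.coe_star_mul_self,
    submatrix_one _ Subtype.val_injective]

theorem mul_rangeEigenvectors :
    K * hK.rangeEigenvectors
      = hK.rangeEigenvectors * diagonal fun i : {i // hK.eigenvalues i ≠ 0} => hK.eigenvalues i := by
  ext i j
  rw [mul_diagonal]
  simpa [rangeEigenvectors, mul_apply, mulVec, dotProduct, mul_comm]
    using congr_fun (hK.mulVec_eigenvectorBasis j) i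

theorem tendsto_det_add_smul_div_pow_rank [Fintype k] [DecidableEq k]
    {L₀ : Matrix n n ℝ} {L : ℝ → Matrix n n ℝ} (hL : Tendsto L atTop (𝓝 L₀))
    {V : Matrix n k ℝ} (hV : Vᵀ * V = 1) (hKV : K * V = 0)
    (hcard : K.rank + Fintype.card k = Fintype.card n) :
    Tendsto (fun t : ℝ => (L t + t • K).det / t ^ K.rank) atTop
      (𝓝 ((∏ i : {i // hK.eigenvalues i ≠ 0}, hK.eigenvalues i) * (Vᵀ * L₀ * V).det)) := by
  have hVQ : hK.rangeEigenvectorsᵀ * V = 0 :=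
    transpose_mul_eq_zero_of_mul_eq_mul_diagonal (isHermitian_iff_isSymm.mp hK) (fun i => i.2)
      (mul_rangeEigenvectors hK) hKV
  have hQ : (fromCols hK.rangeEigenvectors V)ᵀ * fromCols hK.rangeEigenvectors V = 1 := by
    have hQV : Vᵀ * hK.rangeEigenvectors = 0 := by simpa using congrArg Matrix.transpose hVQ
    rw [transpose_fromCols, fromRows_mul_fromCols, transpose_rangeEigenvectors_mul_self, hVQ, hQV,
      hV, fromBlocks_one]
  have hKQ : K * fromCols hK.rangeEigenvectors V = fromCols hK.rangeEigenvectors V *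
      Matrix.fromBlocks (diagonal fun i : {i // hK.eigenvalues i ≠ 0} => hK.eigenvalues i) 0 0
        (0 : Matrix k k ℝ) := by
    simp [mul_fromCols, fromCols_mul_fromBlocks, mul_rangeEigenvectors, hKV]
  have e : {i // hK.eigenvalues i ≠ 0} ⊕ k ≃ n :=
    Fintype.equivOfCardEq (by rw [Fintype.card_sum, ← hK.rank_eq_card_non_zero_eigs, hcard])
  have := tendsto_det_add_smul_div_pow_of_mul_eq_mul_fromBlocks e hL hQ hKQ
  rwa [← hK.rank_eq_card_non_zero_eigs, transpose_fromCols, fromRows_mul, fromRows_mul_fromCols,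
    toBlocks_fromBlocks₂₂] at this

end IsHermitian

end Matrix

theorem pdet_eq_prod_subtype {N : ℕ} {K : Matrix (Fin N) (Fin N) ℝ} (hK : K.IsHermitian) :
    pdet K hK = ∏ i : {i // hK.eigenvalues i ≠ 0}, hK.eigenvalues i :=
  Finset.prod_subtype _ (by simp) _

theorem pdet_eq_det_of_rank_eq {N : ℕ} {K : Matrix (Fin N) (Fin N) ℝ} (hK : K.IsHermitian)
    (h : K.rank = N) : pdet K hK = K.det := by
  have hfilter : Finset.univ.filter (fun i => hK.eigenvalues i ≠ 0) = Finset.univ :=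
    Finset.eq_univ_of_card _ (by rw [← Fintype.card_subtype, ← hK.rank_eq_card_non_zero_eigs, h,
      Fintype.card_fin])
  simp [pdet, hfilter, hK.det_eq_prod_eigenvalues]

theorem det_asymptotics_general
    (N : ℕ) (K : Matrix (Fin N) (Fin N) ℝ) (hK : K.PosSemidef)
    (r : ℕ) (hr : K.rank = r)
    (L : ℝ → Matrix (Fin N) (Fin N) ℝ)
    (L0 : Matrix (Fin N) (Fin N) ℝ)
    (hL : Tendsto L atTop (nhds L0)) :
    (r = N →
      Tendsto (fun t : ℝ => (L t + t • K).det / t ^ N) atTop (nhds K.det)) ∧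
    (r < N →
      ∀ Uperp : Matrix (Fin N) (Fin (N - r)) ℝ,
        Uperpᵀ * Uperp = 1 → K * Uperp = 0 →
        Tendsto (fun t : ℝ => (L t + t • K).det / t ^ r) atTop
          (nhds (pdet K hK.1 * (Uperpᵀ * L0 * Uperp).det))) := by
  subst hr
  have hkernel (Uperp : Matrix (Fin N) (Fin (N - K.rank)) ℝ) (hU : Uperpᵀ * Uperp = 1)
      (hKU : K * Uperp = 0) : Tendsto (fun t : ℝ => (L t + t • K).det / t ^ K.rank) atTop
        (nhds (pdet K hK.1 * (Uperpᵀ * L0 * Uperp).det)) := by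
    rw [pdet_eq_prod_subtype]
    exact hK.1.tendsto_det_add_smul_div_pow_rank hL hU hKU (by simp [K.rank_le_width])
  refine ⟨fun hrN => ?_, fun _ => hkernel⟩
  have : IsEmpty (Fin (N - K.rank)) := by rw [hrN, Nat.sub_self]; infer_instance
  simpa [det_isEmpty, pdet_eq_det_of_rank_eq hK.1 hrN, hrN] using
    hkernel 0 (Subsingleton.elim _ _) (Subsingleton.elim _ _)

/-- Lemma 8 in the Appendix of the paper: the determinant asymptotics
`det(L(t) + t·K) ~ t^{rank K} · pdet(K) · det((U^⊥)ᵀ L⁰ U^⊥)` as `t → ∞`, underlying the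
low-noise expansion of Theorem 2 (there `t = 1/σ²`). -/
theorem det_asymptotics
    (N : ℕ) (K : Matrix (Fin N) (Fin N) ℝ) (hK : K.PosSemidef)
    (r : ℕ) (hr : K.rank = r)
    (L : ℝ → Matrix (Fin N) (Fin N) ℝ) (hLsymm : ∀ t > (0 : ℝ), (L t).IsSymm)
    (L0 : Matrix (Fin N) (Fin N) ℝ)
    (hL : Tendsto L atTop (nhds L0)) :
    (r = N →
      Tendsto (fun t : ℝ => (L t + t • K).det / t ^ N) atTop (nhds K.det)) ∧
    (r < N →
      ∀ Uperp : Matrix (Fin N) (Fin (N - r)) ℝ,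
        Uperpᵀ * Uperp = 1 → K * Uperp = 0 →
        Tendsto (fun t : ℝ => (L t + t • K).det / t ^ r) atTop
          (nhds (pdet K hK.1 * (Uperpᵀ * L0 * Uperp).det))) :=
  det_asymptotics_general N K hK r hr L L0 hL
end

section
/- Let N, r_1, r_2 ∈ ℕ, let U_1 ∈ ℝ^{N×r_1} and U_2 ∈ ℝ^{N×r_2} have orthonormal columns, and let Q_1, Q_2 ∈ ℝ^{N×N} be orthogonal matrices. Set Ũ_1 = Q_1U_1, Ũ_2 = Q_2U_2, ε_1 = ‖I − Q_1‖₂, ε_2 = ‖I − Q_2‖₂ and δ_12 = ‖U_1ᵀU_2‖₂. If 1 − δ_12 > ε_1 + ε_2, then both U_1ᵀ(Ũ_1Ũ_1ᵀ − Ũ_2Ũ_2ᵀ)U_1 and U_2ᵀ(Ũ_2Ũ_2ᵀ − Ũ_1Ũ_1ᵀ)U_2 are positive definite. -/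
/-!
Write `A = Ũ₁ᵀU₁` and `B = Ũ₂ᵀU₁`, so that `U₁ᵀ(Ũ₁Ũ₁ᵀ − Ũ₂Ũ₂ᵀ)U₁ = AᵀA − BᵀB`, whose quadratic
form is `‖Ax‖² − ‖Bx‖²`. Since `U₁ᵀU₁ = I`, `I − A = U₁ᵀ(I − Q₁)ᵀU₁` has norm at most `ε₁`, so
`‖Ax‖ ≥ (1 − ε₁)‖x‖`, while `B = U₂ᵀU₁ − U₂ᵀ(I − Q₂)ᵀU₁` has norm at most `δ₁₂ + ε₂`. The
hypothesis makes the first bound beat the second; the other class is symmetric.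
-/

open Matrix WithLp
open scoped Matrix.Norms.L2Operator

namespace Matrix

variable {m n k : Type*} [Fintype m] [Fintype n] [Fintype k]

lemma mul_norm_le_norm_mulVec [DecidableEq n] (A : Matrix n n ℝ) (x : EuclideanSpace ℝ n) :
    (1 - ‖1 - A‖) * ‖x‖ ≤ ‖toLp 2 (A *ᵥ x)‖ := by
  have hE : ‖toLp 2 ((1 - A) *ᵥ x)‖ ≤ ‖1 - A‖ * ‖x‖ := l2_opNorm_mulVec (1 - A) x
  have hsub : toLp 2 ((1 - A) *ᵥ x) = x - toLp 2 (A *ᵥ x) := by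
    rw [sub_mulVec, one_mulVec, toLp_sub, toLp_ofLp]
  rw [hsub] at hE
  linarith [norm_sub_norm_le x (toLp 2 (A *ᵥ x))]

lemma dotProduct_transpose_mul_self_mulVec (A : Matrix m n ℝ) (x : n → ℝ) :
    x ⬝ᵥ ((Aᵀ * A) *ᵥ x) = ‖toLp 2 (A *ᵥ x)‖ ^ 2 := by
  rw [← mulVec_mulVec, dotProduct_mulVec, vecMul_transpose, EuclideanSpace.real_norm_sq_eq]
  simp [dotProduct, sq]

lemma posDef_transpose_mul_self_sub_of_norm_mulVec_lt {A : Matrix m n ℝ} {B : Matrix k n ℝ}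
    (h : ∀ x : EuclideanSpace ℝ n, x ≠ 0 → ‖toLp 2 (B *ᵥ x)‖ < ‖toLp 2 (A *ᵥ x)‖) :
    (Aᵀ * A - Bᵀ * B).PosDef := by
  refine posDef_iff_dotProduct_mulVec.mpr ⟨?_, fun x hx => ?_⟩
  · simp [IsHermitian, conjTranspose_eq_transpose_of_trivial, transpose_sub, transpose_mul]
  · rw [star_trivial, sub_mulVec, dotProduct_sub, dotProduct_transpose_mul_self_mulVec,
      dotProduct_transpose_mul_self_mulVec, sub_pos]
    exact pow_lt_pow_left₀ (h (toLp 2 x) (by simpa using hx)) (norm_nonneg _) two_ne_zero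

lemma posDef_transpose_mul_self_sub_of_norm_add_lt_one [DecidableEq n] {A : Matrix n n ℝ}
    {B : Matrix k n ℝ} (h : ‖1 - A‖ + ‖B‖ < 1) : (Aᵀ * A - Bᵀ * B).PosDef := by
  refine posDef_transpose_mul_self_sub_of_norm_mulVec_lt fun x hx => ?_
  calc ‖toLp 2 (B *ᵥ x)‖ ≤ ‖B‖ * ‖x‖ := l2_opNorm_mulVec B x
    _ < (1 - ‖1 - A‖) * ‖x‖ := by gcongr; linarith
    _ ≤ ‖toLp 2 (A *ᵥ x)‖ := mul_norm_le_norm_mulVec A x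

lemma l2_opNorm_transpose [DecidableEq m] [DecidableEq n] (A : Matrix m n ℝ) : ‖Aᵀ‖ = ‖A‖ := by
  rw [← conjTranspose_eq_transpose_of_trivial, l2_opNorm_conjTranspose]

lemma l2_opNorm_transpose_mul_comm [DecidableEq n] [DecidableEq k] (A : Matrix m n ℝ)
    (B : Matrix m k ℝ) : ‖Aᵀ * B‖ = ‖Bᵀ * A‖ := by
  rw [← l2_opNorm_transpose, transpose_mul, transpose_transpose]

lemma l2_opNorm_le_one_of_transpose_mul_self_eq_one [DecidableEq n] {U : Matrix m n ℝ}
    (hU : Uᵀ * U = 1) : ‖U‖ ≤ 1 := by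
  have hsq : ‖U‖ * ‖U‖ = ‖(1 : Matrix n n ℝ)‖ := by
    rw [← l2_opNorm_conjTranspose_mul_self, conjTranspose_eq_transpose_of_trivial, hU]
  rcases isEmpty_or_nonempty n
  · simp [Subsingleton.elim U 0]
  · rw [CStarRing.norm_one] at hsq
    nlinarith [norm_nonneg U]

lemma l2_opNorm_transpose_mul_mul_le [DecidableEq m] [DecidableEq n] [DecidableEq k]
    {V : Matrix m k ℝ} {U : Matrix m n ℝ} (hV : ‖V‖ ≤ 1) (hU : ‖U‖ ≤ 1) (M : Matrix m m ℝ) :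
    ‖Vᵀ * M * U‖ ≤ ‖M‖ :=
  calc ‖Vᵀ * M * U‖ ≤ ‖Vᵀ‖ * ‖M‖ * ‖U‖ :=
        (l2_opNorm_mul _ _).trans (by gcongr; exact l2_opNorm_mul _ _)
    _ ≤ 1 * ‖M‖ * 1 := by rw [l2_opNorm_transpose]; gcongr
    _ = ‖M‖ := by ring

end Matrix

variable {m n k : Type*} [Fintype m] [Fintype n] [Fintype k]
  [DecidableEq m] [DecidableEq n] [DecidableEq k]

theorem posDef_compression_sub_rotated_projections {U₁ : Matrix m n ℝ} {U₂ : Matrix m k ℝ}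
    (hU₁ : U₁ᵀ * U₁ = 1) (hU₂ : U₂ᵀ * U₂ = 1) {Q₁ Q₂ : Matrix m m ℝ}
    (h : ‖1 - Q₁‖ + ‖1 - Q₂‖ < 1 - ‖U₁ᵀ * U₂‖) :
    (U₁ᵀ * ((Q₁ * U₁) * (Q₁ * U₁)ᵀ - (Q₂ * U₂) * (Q₂ * U₂)ᵀ) * U₁).PosDef := by
  set A := (Q₁ * U₁)ᵀ * U₁
  set B := (Q₂ * U₂)ᵀ * U₁
  have hform : U₁ᵀ * ((Q₁ * U₁) * (Q₁ * U₁)ᵀ - (Q₂ * U₂) * (Q₂ * U₂)ᵀ) * U₁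
      = Aᵀ * A - Bᵀ * B := by
    simp only [A, B, transpose_mul, transpose_transpose, Matrix.mul_sub, Matrix.sub_mul,
      Matrix.mul_assoc]
  have hA : 1 - A = U₁ᵀ * (1 - Q₁)ᵀ * U₁ := by
    simp only [A, transpose_sub, transpose_one, transpose_mul, Matrix.mul_sub, Matrix.sub_mul,
      Matrix.mul_one, hU₁, Matrix.mul_assoc]
  have hB : B = U₂ᵀ * U₁ - U₂ᵀ * (1 - Q₂)ᵀ * U₁ := by
    simp only [B, transpose_sub, transpose_one, transpose_mul, Matrix.mul_sub, Matrix.sub_mul,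
      Matrix.mul_one, Matrix.mul_assoc, sub_sub_cancel]
  have hU₁norm := l2_opNorm_le_one_of_transpose_mul_self_eq_one hU₁
  have hU₂norm := l2_opNorm_le_one_of_transpose_mul_self_eq_one hU₂
  have hAnorm : ‖1 - A‖ ≤ ‖1 - Q₁‖ := by
    rw [hA, ← l2_opNorm_transpose (1 - Q₁)]
    exact l2_opNorm_transpose_mul_mul_le hU₁norm hU₁norm _
  have hBnorm : ‖B‖ ≤ ‖U₁ᵀ * U₂‖ + ‖1 - Q₂‖ := by
    rw [hB, l2_opNorm_transpose_mul_comm U₁, ← l2_opNorm_transpose (1 - Q₂)]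
    exact (norm_sub_le _ _).trans
      (by gcongr; exact l2_opNorm_transpose_mul_mul_le hU₂norm hU₁norm _)
  rw [hform]
  exact posDef_transpose_mul_self_sub_of_norm_add_lt_one (A := A) (B := B) (by linarith)

theorem rotated_mismatch_posdef_general
    (N r1 r2 : ℕ)
    (U1 : Matrix (Fin N) (Fin r1) ℝ) (U2 : Matrix (Fin N) (Fin r2) ℝ)
    (hU1 : U1ᵀ * U1 = 1) (hU2 : U2ᵀ * U2 = 1)
    (Q1 Q2 : Matrix (Fin N) (Fin N) ℝ)
    (h : ‖(1 : Matrix (Fin N) (Fin N) ℝ) - Q1‖ + ‖(1 : Matrix (Fin N) (Fin N) ℝ) - Q2‖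
        < 1 - ‖U1ᵀ * U2‖) :
    (U1ᵀ * ((Q1 * U1) * (Q1 * U1)ᵀ - (Q2 * U2) * (Q2 * U2)ᵀ) * U1).PosDef ∧
    (U2ᵀ * ((Q2 * U2) * (Q2 * U2)ᵀ - (Q1 * U1) * (Q1 * U1)ᵀ) * U2).PosDef := by
  refine ⟨posDef_compression_sub_rotated_projections hU1 hU2 h,
    posDef_compression_sub_rotated_projections hU2 hU1 ?_⟩
  rw [l2_opNorm_transpose_mul_comm U2]
  linarith

/-- Example 3 of the paper: if the mismatched subspaces are rotated versions
`Ũ_i = Q_iU_i` of the true subspaces, and `1 − δ_12 > ε_1 + ε_2` where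
`ε_i = ‖I − Q_i‖₂` and `δ_12 = ‖U_1ᵀU_2‖₂` (spectral norms), then the principal-angle
conditions of Corollary 2 hold, i.e. `U_iᵀ(Ũ_iŨ_iᵀ − Ũ_jŨ_jᵀ)U_i ≻ 0` for both classes. -/
theorem rotated_mismatch_posdef
    (N r1 r2 : ℕ)
    (U1 : Matrix (Fin N) (Fin r1) ℝ) (U2 : Matrix (Fin N) (Fin r2) ℝ)
    (hU1 : U1ᵀ * U1 = 1) (hU2 : U2ᵀ * U2 = 1)
    (Q1 Q2 : Matrix (Fin N) (Fin N) ℝ)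
    (hQ1 : Q1ᵀ * Q1 = 1) (hQ2 : Q2ᵀ * Q2 = 1)
    (h : ‖(1 : Matrix (Fin N) (Fin N) ℝ) - Q1‖ + ‖(1 : Matrix (Fin N) (Fin N) ℝ) - Q2‖
        < 1 - ‖U1ᵀ * U2‖) :
    (U1ᵀ * ((Q1 * U1) * (Q1 * U1)ᵀ - (Q2 * U2) * (Q2 * U2)ᵀ) * U1).PosDef ∧
    (U2ᵀ * ((Q2 * U2) * (Q2 * U2)ᵀ - (Q1 * U1) * (Q1 * U1)ᵀ) * U2).PosDef :=
  rotated_mismatch_posdef_general N r1 r2 U1 U2 hU1 hU2 Q1 Q2 h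
end
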